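/- arXiv:2105.05279 — 6 statements merged into one kernel-verified Lean document; each statement's English description precedes it below -/
import Mathlib

section
/- For every real number c with c > 1 or c < 3/5, the function u(x,t) = 3(c−1)·sech²( (1/2)·√(4(c−1)/(5c−3))·(x − c t) ) is a smooth solution of the gfBBM equation with α = 2 and p = 1; that is, for all (x,t) ∈ ℝ², ∂_t u + ∂_x u + (1/2)∂_x(u²) − (3/4)∂_x³ u − (5/4)∂_t ∂_x² u = 0. -/
noncomputable def gS0 (z : ℝ) : ℝ := (Real.cosh z)⁻¹ ^ 2
noncomputable def gS1 (z : ℝ) : ℝ := -2 * Real.sinh z * (Real.cosh z)⁻¹ ^ 3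
noncomputable def gS2 (z : ℝ) : ℝ :=
  -2 * (Real.cosh z)⁻¹ ^ 2 + 6 * (Real.sinh z) ^ 2 * (Real.cosh z)⁻¹ ^ 4
noncomputable def gS3 (z : ℝ) : ℝ :=
  16 * Real.sinh z * (Real.cosh z)⁻¹ ^ 3 - 24 * (Real.sinh z) ^ 3 * (Real.cosh z)⁻¹ ^ 5

lemma gch (z : ℝ) : Real.cosh z ≠ 0 := (Real.cosh_pos z).ne'

lemma dgS0 (z : ℝ) : HasDerivAt gS0 (gS1 z) z := by
  have h := ((Real.hasDerivAt_cosh z).inv (gch z)).pow 2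
  convert h using 1 <;> try rfl
  unfold gS1
  push_cast
  simp only [Pi.inv_apply, Pi.pow_apply]
  ring

lemma dgS1 (z : ℝ) : HasDerivAt gS1 (gS2 z) z := by
  have h := ((Real.hasDerivAt_sinh z).const_mul (-2)).mul
    (((Real.hasDerivAt_cosh z).inv (gch z)).pow 3)
  convert h using 1 <;> try rfl
  unfold gS2
  push_cast
  simp only [Pi.inv_apply, Pi.pow_apply]
  linear_combination (2 * (Real.cosh z)⁻¹ ^ 2) * (mul_inv_cancel₀ (gch z))

lemma dgS2 (z : ℝ) : HasDerivAt gS2 (gS3 z) z := by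
  have h := ((((Real.hasDerivAt_cosh z).inv (gch z)).pow 2).const_mul (-2)).add
    ((((Real.hasDerivAt_sinh z).pow 2).const_mul 6).mul
      (((Real.hasDerivAt_cosh z).inv (gch z)).pow 4))
  convert h using 1 <;> try rfl
  unfold gS3
  push_cast
  simp only [Pi.inv_apply, Pi.pow_apply]
  linear_combination (-12 * Real.sinh z * (Real.cosh z)⁻¹ ^ 3) * (mul_inv_cancel₀ (gch z))

/-- Chain rule for `y ↦ f (a*y - b)`. -/
lemma chainD (f f' : ℝ → ℝ) (h : ∀ z, HasDerivAt f (f' z) z) (a b x : ℝ) :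
    HasDerivAt (fun y => f (a * y - b)) (a * f' (a * x - b)) x := by
  have h2 : HasDerivAt (fun y : ℝ => a * y - b) a x := by
    simpa using ((hasDerivAt_id x).const_mul a).sub_const b
  have := (h (a * x - b)).comp x h2
  convert this using 1 <;> try rfl
  ring

/-- Chain rule for `s ↦ f (b - a*s)`. -/
lemma chainT (f f' : ℝ → ℝ) (h : ∀ z, HasDerivAt f (f' z) z) (a b t : ℝ) :
    HasDerivAt (fun s => f (b - a * s)) (-(a * f' (b - a * t))) t := by
  have h2 : HasDerivAt (fun s : ℝ => b - a * s) (-a) t := by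
    simpa using (((hasDerivAt_id t).const_mul a).const_sub b)
  have := (h (b - a * t)).comp t h2
  convert this using 1 <;> try rfl
  ring

/-- For every real `c` with `c > 1` or `c < 3/5`, the function
`u(x,t) = 3(c−1)·sech²((1/2)·√(4(c−1)/(5c−3))·(x − c t))` is a smooth solution of the
gfBBM equation with `α = 2`, `p = 1`. -/
theorem stmt_0 (c : ℝ) (hc : 1 < c ∨ c < 3 / 5)
    (u : ℝ → ℝ → ℝ)
    (hu : ∀ x t : ℝ, u x t =
      3 * (c - 1) *
        (1 / Real.cosh ((1 / 2) * Real.sqrt (4 * (c - 1) / (5 * c - 3)) * (x - c * t))) ^ 2) :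
    ContDiff ℝ (⊤ : ℕ∞) (Function.uncurry u) ∧
    ∀ x t : ℝ,
      deriv (fun s => u x s) t + deriv (fun y => u y t) x
        + (1 / 2) * deriv (fun y => (u y t) ^ 2) x
        - (3 / 4) * iteratedDeriv 3 (fun y => u y t) x
        - (5 / 4) * deriv (fun s => iteratedDeriv 2 (fun y => u y s) x) t = 0 := by
  set k : ℝ := (1 / 2) * Real.sqrt (4 * (c - 1) / (5 * c - 3)) with hkdef
  set A : ℝ := 3 * (c - 1) with hA
  have h53 : 5 * c - 3 ≠ 0 := by rcases hc with h | h <;> intro h0 <;> nlinarith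
  have harg : 0 ≤ 4 * (c - 1) / (5 * c - 3) := by
    rcases hc with h | h
    · apply div_nonneg <;> nlinarith
    · rw [div_nonneg_iff]
      right
      constructor <;> nlinarith
  have hk2 : k ^ 2 * (5 * c - 3) = c - 1 := by
    have hs : (Real.sqrt (4 * (c - 1) / (5 * c - 3))) ^ 2 = 4 * (c - 1) / (5 * c - 3) :=
      Real.sq_sqrt harg
    rw [hkdef, mul_pow, hs]
    field_simp
    rw [mul_div_assoc, div_self (by contrapose! h53; linarith)]
    ring
  -- the key pointwise description of u
  have hu' : ∀ x t : ℝ, u x t = A * gS0 (k * x - k * c * t) := by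
    intro x t
    rw [hu]
    unfold gS0
    rw [one_div]
    congr 2
    ring_nf
  constructor
  · -- smoothness
    have hfun : Function.uncurry u = fun p : ℝ × ℝ => A * (Real.cosh (k * p.1 - k * c * p.2))⁻¹ ^ 2 := by
      funext p
      have := hu' p.1 p.2
      simpa [Function.uncurry, gS0] using this
    rw [hfun]
    have h1 : ContDiff ℝ (⊤ : ℕ∞) fun p : ℝ × ℝ => k * p.1 - k * c * p.2 := by fun_prop
    exact contDiff_const.mul (((Real.contDiff_cosh.comp h1).inv (fun p => gch _)).pow 2)
  · intro x t
    -- x-derivative facts, as functions (for iterating)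
    have hfx : ∀ t : ℝ, (fun y => u y t) = fun y => A * gS0 (k * y - k * c * t) := by
      intro t; funext y; exact hu' y t
    have hd0 : ∀ t y : ℝ, HasDerivAt (fun y => u y t) (A * (k * gS1 (k * y - k * c * t))) y := by
      intro t y
      rw [hfx]
      exact (chainD gS0 gS1 dgS0 k (k * c * t) y).const_mul A
    have e1 : ∀ t : ℝ, deriv (fun y => u y t) = fun y => A * (k * gS1 (k * y - k * c * t)) := by
      intro t; funext y; exact (hd0 t y).deriv
    have hd1 : ∀ t y : ℝ, HasDerivAt (fun y => A * (k * gS1 (k * y - k * c * t)))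
        (A * (k * (k * gS2 (k * y - k * c * t)))) y := by
      intro t y
      exact ((chainD gS1 gS2 dgS1 k (k * c * t) y).const_mul k).const_mul A
    have e2 : ∀ t : ℝ, deriv (fun y => A * (k * gS1 (k * y - k * c * t)))
        = fun y => A * (k * (k * gS2 (k * y - k * c * t))) := by
      intro t; funext y; exact (hd1 t y).deriv
    have hd2 : ∀ t y : ℝ, HasDerivAt (fun y => A * (k * (k * gS2 (k * y - k * c * t))))
        (A * (k * (k * (k * gS3 (k * y - k * c * t))))) y := by
      intro t y
      exact (((chainD gS2 gS3 dgS2 k (k * c * t) y).const_mul k).const_mul k).const_mul A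
    have e3 : ∀ t : ℝ, deriv (fun y => A * (k * (k * gS2 (k * y - k * c * t))))
        = fun y => A * (k * (k * (k * gS3 (k * y - k * c * t)))) := by
      intro t; funext y; exact (hd2 t y).deriv
    -- second iterated derivative in x, as a function of t
    have hiter2 : ∀ s : ℝ, iteratedDeriv 2 (fun y => u y s) x
        = A * (k * (k * gS2 (k * x - k * c * s))) := by
      intro s
      rw [iteratedDeriv_succ, iteratedDeriv_one, e1 s, e2 s]
    -- third iterated derivative in x
    have hiter3 : iteratedDeriv 3 (fun y => u y t) x
        = A * (k * (k * (k * gS3 (k * x - k * c * t)))) := by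
      rw [iteratedDeriv_succ, iteratedDeriv_succ, iteratedDeriv_one, e1 t, e2 t, e3 t]
    -- t-derivative of u
    have hT0 : HasDerivAt (fun s => u x s) (A * (-(k * c * gS1 (k * x - k * c * t)))) t := by
      have hfun : (fun s => u x s) = fun s => A * gS0 (k * x - k * c * s) := by
        funext s; exact hu' x s
      rw [hfun]
      exact (chainT gS0 gS1 dgS0 (k * c) (k * x) t).const_mul A
    -- t-derivative of the second x-derivative
    have hT2 : HasDerivAt (fun s => iteratedDeriv 2 (fun y => u y s) x)
        (A * (k * (k * (-(k * c * gS3 (k * x - k * c * t)))))) t := by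
      have hfun : (fun s => iteratedDeriv 2 (fun y => u y s) x)
          = fun s => A * (k * (k * gS2 (k * x - k * c * s))) := by
        funext s; exact hiter2 s
      rw [hfun]
      exact (((chainT gS2 gS3 dgS2 (k * c) (k * x) t).const_mul k).const_mul k).const_mul A
    -- derivative of u^2 in x
    have hsq : HasDerivAt (fun y => (u y t) ^ 2)
        ((2 : ℕ) * (u x t) ^ 1 * (A * (k * gS1 (k * x - k * c * t)))) x :=
      (hd0 t x).pow 2
    -- rewrite everything
    rw [hT0.deriv, (hd0 t x).deriv, hsq.deriv, hiter3, hT2.deriv, hu' x t]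
    -- now pure algebra
    set θ : ℝ := k * x - k * c * t with hθ
    have hch0 : Real.cosh θ ≠ 0 := gch θ
    have h1 : Real.cosh θ * (Real.cosh θ)⁻¹ = 1 := mul_inv_cancel₀ hch0
    have h2 : Real.cosh θ ^ 2 - Real.sinh θ ^ 2 = 1 := Real.cosh_sq_sub_sinh_sq θ
    simp only [gS0, gS1, gS2, gS3]
    set s : ℝ := Real.sinh θ
    set ch : ℝ := Real.cosh θ
    set w : ℝ := ch⁻¹
    push_cast
    rw [hA]
    linear_combination (3 * (c - 1) * k * s * (4 * w ^ 3 - 6 * s ^ 2 * w ^ 5)) * hk2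
      + (6 * (3 * (c - 1)) * k * s * (c - 1) * w ^ 5) * h2
      + (-(6 * (3 * (c - 1)) * k * s * (c - 1) * w ^ 3 * (w * ch + 1))) * h1
end

section
/- Let c be a real number with c > 1 or c < 3/5, and let Q(ξ) = 3(c−1)·sech²( √((c−1)/(5c−3))·ξ ). Then the momentum of Q has the closed form F(Q) = (1/2)∫_ℝ ( Q(ξ)² + (5/4)·Q'(ξ)² ) dξ = 6·(c−1)²·√((5c−3)/(c−1))·(6c−4)/(5c−3). -/
/-!
For `Q ξ = a sech²(kξ)` one has `Q' = -2 a k tanh(kξ) sech²(kξ)`, and since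
`sech² = 1 - tanh²` the density `Q² + b Q'²` is a polynomial in `t = tanh(kξ)` times `sech²(kξ) = k⁻¹ dt/dξ`.
The substitution `t = tanh(kξ)` turns the momentum into `k⁻¹ ∫_{-1}^{1}` of that polynomial,
which gives `∫ (Q² + b Q'²) = (4a²/3)(1/k + 4bk/5)`. With `a = 3(c - 1)`, `b = 5/4` and
`k² = (c - 1)/(5c - 3)` this is the stated closed form.
-/

open MeasureTheory Real Filter Set Topology

theorem integrable_of_hasDerivAt_of_nonneg {g g' : ℝ → ℝ} {m n : ℝ}
    (hderiv : ∀ x, HasDerivAt g (g' x) x) (hg' : ∀ x, 0 ≤ g' x)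
    (hbot : Tendsto g atBot (𝓝 m)) (htop : Tendsto g atTop (𝓝 n)) : Integrable g' := by
  have hIoi : IntegrableOn g' (Ioi 0) :=
    integrableOn_Ioi_deriv_of_nonneg' (fun x _ => hderiv x) (fun x _ => hg' x) htop
  have hIio : IntegrableOn g' (Iio 0) := by
    have hderiv_refl (x : ℝ) : HasDerivAt (fun x => -g (-x)) (g' (-x)) x := by
      have h := ((hderiv (-x)).comp x (hasDerivAt_neg x)).neg
      rwa [mul_neg_one, neg_neg] at h
    have hrefl : IntegrableOn (fun x => g' (-x)) (Ioi (-0)) :=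
      integrableOn_Ioi_deriv_of_nonneg' (fun x _ => hderiv_refl x) (fun x _ => hg' (-x))
        (hbot.comp tendsto_neg_atTop_atBot).neg
    simpa using hrefl.comp_neg_Iio
  rw [← integrableOn_univ, ← Iio_union_Ici (a := (0 : ℝ))]
  exact hIio.union ((integrableOn_Ici_iff_integrableOn_Ioi (by simp)).2 hIoi)

namespace Real

theorem continuous_tanh : Continuous tanh := by
  simp_rw [funext tanh_eq_sinh_div_cosh]
  exact continuous_sinh.div continuous_cosh fun x => (cosh_pos x).ne'

theorem inv_cosh_sq_eq_one_sub_tanh_sq (x : ℝ) : (cosh x ^ 2)⁻¹ = 1 - tanh x ^ 2 := by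
  have := cosh_pos x
  rw [tanh_eq_sinh_div_cosh]
  field_simp
  linear_combination (-1) * cosh_sq_sub_sinh_sq x

theorem hasDerivAt_tanh (x : ℝ) : HasDerivAt tanh (cosh x ^ 2)⁻¹ x := by
  have h := (hasDerivAt_sinh x).div (hasDerivAt_cosh x) (cosh_pos x).ne'
  rw [show sinh / cosh = tanh from funext fun y => (tanh_eq_sinh_div_cosh y).symm,
    ← sq, ← sq, cosh_sq_sub_sinh_sq] at h
  simpa using h

theorem tanh_eq_one_sub_two_div (x : ℝ) : tanh x = 1 - 2 / (exp (2 * x) + 1) := by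
  rw [tanh_eq_sinh_div_cosh, sinh_eq, cosh_eq, two_mul, exp_add, exp_neg]
  have := exp_pos x
  field_simp
  ring

theorem tendsto_tanh_atTop : Tendsto tanh atTop (𝓝 1) := by
  have h : Tendsto (fun x : ℝ => exp (2 * x) + 1) atTop atTop :=
    tendsto_atTop_add_const_right _ 1 (tendsto_exp_atTop.comp (tendsto_id.const_mul_atTop two_pos))
  simpa [funext tanh_eq_one_sub_two_div] using (h.const_div_atTop 2).const_sub 1

theorem tendsto_tanh_atBot : Tendsto tanh atBot (𝓝 (-1)) := by
  simpa [Function.comp_def] using (tendsto_tanh_atTop.comp tendsto_neg_atBot_atTop).neg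

theorem integrable_inv_cosh_sq : Integrable fun x => (cosh x ^ 2)⁻¹ :=
  integrable_of_hasDerivAt_of_nonneg hasDerivAt_tanh (fun x => by positivity)
    tendsto_tanh_atBot tendsto_tanh_atTop

theorem integral_comp_tanh_div_cosh_sq {f : ℝ → ℝ} (hf : Continuous f) :
    ∫ x, f (tanh x) / cosh x ^ 2 = ∫ t in (-1)..1, f t := by
  set F := fun u => ∫ t in (-1)..u, f t
  have hF : Continuous F :=
    intervalIntegral.continuous_primitive (fun _ _ => hf.intervalIntegrable _ _) (-1)
  have hderiv : ∀ x, HasDerivAt (F ∘ tanh) (f (tanh x) / cosh x ^ 2) x := fun x =>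
    (hf.integral_hasStrictDerivAt (-1) (tanh x)).hasDerivAt.comp x (hasDerivAt_tanh x)
  obtain ⟨C, hC⟩ :=
    isCompact_Icc.exists_bound_of_continuousOn (hf.continuousOn (s := Icc (-1) 1))
  have hint : Integrable fun x => f (tanh x) / cosh x ^ 2 := by
    simp_rw [div_eq_mul_inv]
    refine integrable_inv_cosh_sq.bdd_mul (hf.comp continuous_tanh).aestronglyMeasurable
      (Eventually.of_forall fun x => hC _ ⟨(neg_one_lt_tanh x).le, (tanh_lt_one x).le⟩)
  rw [integral_of_hasDerivAt_of_tendsto hderiv hint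
    ((hF.tendsto _).comp tendsto_tanh_atBot) ((hF.tendsto _).comp tendsto_tanh_atTop)]
  simp [F]

theorem hasDerivAt_inv_cosh_sq (x : ℝ) :
    HasDerivAt (fun x => (cosh x ^ 2)⁻¹) (-2 * tanh x / cosh x ^ 2) x := by
  have hcosh := cosh_pos x
  refine (((hasDerivAt_cosh x).fun_pow 2).inv (by positivity)).congr_deriv ?_
  rw [tanh_eq_sinh_div_cosh]
  field_simp
  ring

theorem integral_sech_sq_momentum (a b : ℝ) {k : ℝ} (hk : 0 < k) :
    ∫ ξ, ((a * (cosh (k * ξ) ^ 2)⁻¹) ^ 2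
        + b * deriv (fun ξ => a * (cosh (k * ξ) ^ 2)⁻¹) ξ ^ 2)
      = 4 * a ^ 2 / 3 * (k⁻¹ + 4 * b * k / 5) := by
  set p : ℝ → ℝ := fun t => a ^ 2 * (1 - t ^ 2) + 4 * b * a ^ 2 * k ^ 2 * (t ^ 2 - t ^ 4)
  have hderiv (ξ : ℝ) : deriv (fun ξ => a * (cosh (k * ξ) ^ 2)⁻¹) ξ
      = a * (-2 * tanh (k * ξ) / cosh (k * ξ) ^ 2) * k :=
    (((hasDerivAt_inv_cosh_sq (k * ξ)).comp ξ ((hasDerivAt_id ξ).const_mul k)).const_mul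
      a).deriv.trans (by simp [mul_assoc])
  have hdensity (ξ : ℝ) : (a * (cosh (k * ξ) ^ 2)⁻¹) ^ 2
        + b * deriv (fun ξ => a * (cosh (k * ξ) ^ 2)⁻¹) ξ ^ 2
      = p (tanh (k * ξ)) / cosh (k * ξ) ^ 2 := by
    have h := inv_cosh_sq_eq_one_sub_tanh_sq (k * ξ)
    rw [hderiv, ← inv_mul_eq_div, ← inv_mul_eq_div, h]
    ring
  have hpoly : ∫ t in (-1)..1, p t = 4 * a ^ 2 / 3 + 4 * (4 * b * a ^ 2 * k ^ 2) / 15 := by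
    rw [intervalIntegral.integral_add, intervalIntegral.integral_const_mul,
      intervalIntegral.integral_const_mul, intervalIntegral.integral_sub,
      intervalIntegral.integral_sub]
    all_goals try (apply Continuous.intervalIntegrable; fun_prop)
    norm_num [integral_pow]
    ring
  simp_rw [hdensity]
  rw [Measure.integral_comp_mul_left (fun y => p (tanh y) / cosh y ^ 2),
    integral_comp_tanh_div_cosh_sq (by fun_prop), hpoly, abs_of_pos (inv_pos.2 hk), smul_eq_mul]
  field_simp
  ring

end Real

/-- Closed form of the momentum `F(Q) = (1/2)∫ (Q² + (5/4)(Q')²)` of the explicit solitary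
wave profile of the gfBBM equation with `α = 2`, `p = 1`. -/
theorem stmt_8 (c : ℝ) (hc : 1 < c ∨ c < 3 / 5)
    (Q : ℝ → ℝ)
    (hQ : ∀ ξ : ℝ, Q ξ =
      3 * (c - 1) * (1 / Real.cosh (Real.sqrt ((c - 1) / (5 * c - 3)) * ξ)) ^ 2) :
    (1 / 2) * ∫ ξ : ℝ, (Q ξ ^ 2 + (5 / 4) * deriv Q ξ ^ 2)
      = 6 * (c - 1) ^ 2 * Real.sqrt ((5 * c - 3) / (c - 1)) * ((6 * c - 4) / (5 * c - 3)) := by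
  have hratio : 0 < (c - 1) / (5 * c - 3) := by
    rcases hc with hc | hc
    · exact div_pos (by linarith) (by linarith)
    · exact div_pos_of_neg_of_neg (by linarith) (by linarith)
  set k := √((c - 1) / (5 * c - 3)) with hk_def
  have hk : 0 < k := sqrt_pos.2 hratio
  have hk_sq : 1 + k ^ 2 = (6 * c - 4) / (5 * c - 3) := by
    have hden : 5 * c - 3 ≠ 0 := fun h => by simp [h] at hratio
    rw [hk_def, sq_sqrt hratio.le, one_add_div hden]
    ring
  have hsqrt : √((5 * c - 3) / (c - 1)) = k⁻¹ := by rw [← inv_div, sqrt_inv]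
  obtain rfl : Q = fun ξ => 3 * (c - 1) * (cosh (k * ξ) ^ 2)⁻¹ :=
    funext fun ξ => by rw [hQ, one_div, inv_pow]
  rw [integral_sech_sq_momentum _ _ hk, hsqrt, ← hk_sq]
  field_simp
  ring
end

section
/- Fix a real number α > 1/3 and define K : (0,3/5) ∪ (1,∞) → ℝ by K(c) = (c−1)²·((5c−3)/(4(c−1)))^{1/α}·( 1 + 5(c−1)/((5c−3)(3α−1)) ). Then K is differentiable at every c ∈ (0,3/5) ∪ (1,∞), and for such c one has K'(c) = 0 if and only if c = c₁ or c = c₂, where c₁ = (9α+2+√2·√(3α−1))/(15α) and c₂ = (9α+2−√2·√(3α−1))/(15α). -/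
/-!
On `(0,3/5) ∪ (1,∞)` the base `(5c-3)/(4(c-1))` of the real power is positive, so `K` is a
product of smooth functions there. Differentiating and clearing denominators gives
`K'(c) = r^{1/α} (c-1) P(c) / (α (3α-1) (5c-3)²)` with `r = (5c-3)/(4(c-1)) > 0` and `P` a
quadratic in `c`, so `K'` vanishes exactly at the roots of `P`, which are `c₁` and `c₂`.
-/

open Real Set Filter Topology

namespace GfBBM

noncomputable def momentum (α c : ℝ) : ℝ :=
  (c - 1) ^ 2 * ((5 * c - 3) / (4 * (c - 1))) ^ ((1 : ℝ) / α) *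
    (1 + 5 * (c - 1) / ((5 * c - 3) * (3 * α - 1)))

/-- The quadratic factor of the numerator of `∂_c momentum α c`. -/
def momentumQuadratic (α c : ℝ) : ℝ :=
  150 * α ^ 2 * c ^ 2 - (180 * α ^ 2 + 40 * α) * c + (54 * α ^ 2 + 20 * α + 4)

lemma momentumQuadratic_eq_mul_sub_mul_sub {α : ℝ} (hα₀ : α ≠ 0) (hα : 0 ≤ 3 * α - 1) (c : ℝ) :
    momentumQuadratic α c =
      150 * α ^ 2 * (c - (9 * α + 2 + √2 * √(3 * α - 1)) / (15 * α)) *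
        (c - (9 * α + 2 - √2 * √(3 * α - 1)) / (15 * α)) := by
  have hdisc : (√2 * √(3 * α - 1)) ^ 2 = 2 * (3 * α - 1) := by
    rw [mul_pow, sq_sqrt zero_le_two, sq_sqrt hα]
  generalize √2 * √(3 * α - 1) = s at hdisc ⊢
  unfold momentumQuadratic
  field_simp
  linear_combination 150 * hdisc

lemma momentumQuadratic_eq_zero_iff {α : ℝ} (hα₀ : α ≠ 0) (hα : 0 ≤ 3 * α - 1) (c : ℝ) :
    momentumQuadratic α c = 0 ↔
      c = (9 * α + 2 + √2 * √(3 * α - 1)) / (15 * α) ∨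
        c = (9 * α + 2 - √2 * √(3 * α - 1)) / (15 * α) := by
  rw [momentumQuadratic_eq_mul_sub_mul_sub hα₀ hα, mul_eq_zero, mul_eq_zero, sub_eq_zero,
    sub_eq_zero]
  simp [hα₀]

lemma hasDerivAt_momentum {α c : ℝ} (hα₀ : α ≠ 0) (hα : 3 * α - 1 ≠ 0) (hc₁ : c - 1 ≠ 0)
    (hc₃ : 5 * c - 3 ≠ 0) :
    HasDerivAt (momentum α)
      (((5 * c - 3) / (4 * (c - 1))) ^ ((1 : ℝ) / α) * ((c - 1) * momentumQuadratic α c) /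
        (α * (3 * α - 1) * (5 * c - 3) ^ 2)) c := by
  have hbase : HasDerivAt (fun x : ℝ => (5 * x - 3) / (4 * (x - 1)))
      ((5 * (4 * (c - 1)) - (5 * c - 3) * 4) / (4 * (c - 1)) ^ 2) c :=
    (((hasDerivAt_id c).const_mul 5).sub_const 3 |>.congr_deriv (by simp)).div
      (((hasDerivAt_id c).sub_const 1).const_mul 4 |>.congr_deriv (by simp))
      (mul_ne_zero four_ne_zero hc₁)
  have hbase_ne : (5 * c - 3) / (4 * (c - 1)) ≠ 0 :=
    div_ne_zero hc₃ (mul_ne_zero four_ne_zero hc₁)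
  have hcorr : HasDerivAt (fun x : ℝ => 1 + 5 * (x - 1) / ((5 * x - 3) * (3 * α - 1)))
      ((5 * ((5 * c - 3) * (3 * α - 1)) - 5 * (c - 1) * (5 * (3 * α - 1))) /
        ((5 * c - 3) * (3 * α - 1)) ^ 2) c :=
    ((((hasDerivAt_id c).sub_const 1).const_mul 5 |>.congr_deriv (by simp)).div
      ((((hasDerivAt_id c).const_mul 5).sub_const 3).mul_const (3 * α - 1)
        |>.congr_deriv (by simp)) (mul_ne_zero hc₃ hα)).const_add 1
  have hsq : HasDerivAt (fun x : ℝ => (x - 1) ^ 2) (2 * (c - 1)) c := by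
    simpa using ((hasDerivAt_id c).sub_const 1).fun_pow 2
  refine ((hsq.mul (hbase.rpow_const (Or.inl hbase_ne))).mul hcorr).congr_deriv ?_
  simp only [Pi.mul_apply]
  rw [rpow_sub_one hbase_ne]
  have hc₃' : c * 5 - 3 ≠ 0 := by rwa [mul_comm]
  unfold momentumQuadratic
  field_simp
  ring

lemma sub_one_ne_zero_and_base_pos {c : ℝ} (hc : c ∈ Ioo (0 : ℝ) (3 / 5) ∪ Ioi 1) :
    c - 1 ≠ 0 ∧ 5 * c - 3 ≠ 0 ∧ 0 < (5 * c - 3) / (4 * (c - 1)) := by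
  rcases hc with ⟨-, hc⟩ | hc
  · exact ⟨by linarith, by linarith, div_pos_of_neg_of_neg (by linarith) (by linarith)⟩
  · have hc : (1 : ℝ) < c := hc
    exact ⟨by linarith, by linarith, div_pos (by linarith) (by linarith)⟩

end GfBBM

open GfBBM in
/-- For `α > 1/3`, the momentum function `K` (case `p = 1`) is differentiable on
`(0,3/5) ∪ (1,∞)` and its derivative vanishes exactly at `c₁` and `c₂`. -/
theorem stmt_12 (α : ℝ) (hα : 1 / 3 < α)
    (K : ℝ → ℝ)
    (hK : ∀ c ∈ Set.Ioo (0 : ℝ) (3 / 5) ∪ Set.Ioi (1 : ℝ),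
      K c = (c - 1) ^ 2 * ((5 * c - 3) / (4 * (c - 1))) ^ ((1 : ℝ) / α) *
        (1 + 5 * (c - 1) / ((5 * c - 3) * (3 * α - 1))))
    (c₁ c₂ : ℝ)
    (hc₁ : c₁ = (9 * α + 2 + Real.sqrt 2 * Real.sqrt (3 * α - 1)) / (15 * α))
    (hc₂ : c₂ = (9 * α + 2 - Real.sqrt 2 * Real.sqrt (3 * α - 1)) / (15 * α)) :
    ∀ c ∈ Set.Ioo (0 : ℝ) (3 / 5) ∪ Set.Ioi (1 : ℝ),
      DifferentiableAt ℝ K c ∧ (deriv K c = 0 ↔ c = c₁ ∨ c = c₂) := by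
  intro c hc
  have hα₀ : α ≠ 0 := by positivity
  have hα₃ : 0 < 3 * α - 1 := by linarith
  obtain ⟨hc₁', hc₃, hbase⟩ := sub_one_ne_zero_and_base_pos hc
  have hKeq : K =ᶠ[𝓝 c] momentum α :=
    eventuallyEq_of_mem ((isOpen_Ioo.union isOpen_Ioi).mem_nhds hc) hK
  have hKd := (hasDerivAt_momentum hα₀ hα₃.ne' hc₁' hc₃).congr_of_eventuallyEq hKeq
  refine ⟨hKd.differentiableAt, ?_⟩
  rw [hKd.deriv, hc₁, hc₂, ← momentumQuadratic_eq_zero_iff hα₀ hα₃.le, div_eq_zero_iff,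
    mul_eq_zero, mul_eq_zero]
  have hden : α * (3 * α - 1) * (5 * c - 3) ^ 2 ≠ 0 := by positivity
  simp [(rpow_pos_of_pos hbase _).ne', hc₁', hden]
end

section
/- Fix a real number α > 1, define K : (0,3/5) ∪ (1,∞) → ℝ by K(c) = (c−1)²·((5c−3)/(4(c−1)))^{1/α}·( 1 + 5(c−1)/((5c−3)(3α−1)) ), and set c₂ = (9α+2−√2·√(3α−1))/(15α). Then K'(c) > 0 for every c ∈ (c₂,3/5) and every c > 1, and K'(c) < 0 for every c ∈ (0,c₂). -/
/-!
Writing `r c = (5c - 3) / (4(c - 1))`, a direct computation gives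
`K' c = 2 r(c)^{1/α} (c - 1) Q(c) / (α (3α - 1) (5c - 3)²)` with the quadratic
`Q(c) = 75α²c² - (90α² + 20α)c + 27α² + 10α + 2`, so the sign of `K'` is that of `(c - 1) Q(c)`.
With `u = 15αc - 9α - 2` and `s = √2 √(3α - 1)` one has `3Q = u² - s²`, whose roots are
`c₂ = (9α + 2 - s)/(15α)`, which lies below `3/5` because `s > 2` for `α > 1`, and a larger
root in `(3/5, 1)`.
-/

open Real Set

noncomputable def momentum (α c : ℝ) : ℝ :=
  (c - 1) ^ 2 * ((5 * c - 3) / (4 * (c - 1))) ^ ((1 : ℝ) / α) *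
    (1 + 5 * (c - 1) / ((5 * c - 3) * (3 * α - 1)))

def momentumQuad (α c : ℝ) : ℝ :=
  75 * α ^ 2 * c ^ 2 - (90 * α ^ 2 + 20 * α) * c + (27 * α ^ 2 + 10 * α + 2)

noncomputable def momentumWeight (α c : ℝ) : ℝ :=
  2 * ((5 * c - 3) / (4 * (c - 1))) ^ ((1 : ℝ) / α) / (α * (3 * α - 1) * (5 * c - 3) ^ 2)

lemma hasDerivAt_momentum {α c : ℝ} (hα : α ≠ 0) (h3α : 3 * α - 1 ≠ 0)
    (hr : 0 < (5 * c - 3) / (4 * (c - 1))) :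
    HasDerivAt (momentum α) (momentumWeight α c * ((c - 1) * momentumQuad α c)) c := by
  have hc3 : 5 * c - 3 ≠ 0 := (div_pos_iff.mp hr).elim (fun h ↦ h.1.ne') (fun h ↦ h.1.ne)
  have hc4 : 4 * (c - 1) ≠ 0 := (div_pos_iff.mp hr).elim (fun h ↦ h.2.ne') (fun h ↦ h.2.ne)
  have hsq : HasDerivAt (fun c : ℝ ↦ (c - 1) ^ 2) (2 * (c - 1)) c := by
    simpa using ((hasDerivAt_id c).sub_const 1).fun_pow 2
  have hnum : HasDerivAt (fun c : ℝ ↦ 5 * c - 3) 5 c := by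
    simpa using ((hasDerivAt_id c).const_mul 5).sub_const 3
  have hden : HasDerivAt (fun c : ℝ ↦ 4 * (c - 1)) 4 c := by
    simpa using ((hasDerivAt_id c).sub_const 1).const_mul 4
  have hpow := (hnum.div hden hc4).rpow_const (p := 1 / α) (Or.inl hr.ne')
  have hlin : HasDerivAt (fun c : ℝ ↦ 5 * (c - 1)) 5 c := by
    simpa using ((hasDerivAt_id c).sub_const 1).const_mul 5
  have hcorr := (hlin.div (hnum.mul_const (3 * α - 1)) (mul_ne_zero hc3 h3α)).const_add 1
  refine ((hsq.fun_mul hpow).fun_mul hcorr).congr_deriv ?_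
  simp only [Pi.div_apply]
  rw [rpow_sub hr, rpow_one, momentumWeight, momentumQuad]
  generalize ((5 * c - 3) / (4 * (c - 1))) ^ (1 / α) = t
  have hc1 : c - 1 ≠ 0 := by contrapose! hc4; rw [hc4, mul_zero]
  have hc3' : c * 5 - 3 ≠ 0 := by rwa [mul_comm]
  field_simp
  ring

lemma momentumWeight_pos {α c : ℝ} (hα : 1 / 3 < α) (hr : 0 < (5 * c - 3) / (4 * (c - 1))) :
    0 < momentumWeight α c := by
  have hc3 : 5 * c - 3 ≠ 0 := (div_pos_iff.mp hr).elim (fun h ↦ h.1.ne') (fun h ↦ h.1.ne)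
  unfold momentumWeight
  have : 0 < α * (3 * α - 1) := mul_pos (by linarith) (by linarith)
  positivity

lemma ratio_pos_of_mem {c : ℝ} (hc : c ∈ Ioo (0 : ℝ) (3 / 5) ∪ Ioi 1) :
    0 < (5 * c - 3) / (4 * (c - 1)) := by
  rcases hc with ⟨-, hc⟩ | hc
  · exact div_pos_of_neg_of_neg (by linarith) (by linarith)
  · exact div_pos (by linarith [mem_Ioi.mp hc]) (by linarith [mem_Ioi.mp hc])

lemma deriv_eq_momentumWeight_mul {α : ℝ} (hα : 1 / 3 < α) {K : ℝ → ℝ}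
    (hK : ∀ c ∈ Ioo (0 : ℝ) (3 / 5) ∪ Ioi 1, K c = momentum α c) {c : ℝ}
    (hc : c ∈ Ioo (0 : ℝ) (3 / 5) ∪ Ioi 1) :
    deriv K c = momentumWeight α c * ((c - 1) * momentumQuad α c) := by
  have hKc : K =ᶠ[nhds c] momentum α :=
    Filter.eventually_of_mem ((isOpen_Ioo.union isOpen_Ioi).mem_nhds hc) hK
  rw [hKc.deriv_eq]
  exact (hasDerivAt_momentum (by linarith) (by linarith) (ratio_pos_of_mem hc)).deriv

lemma three_mul_momentumQuad (α c : ℝ) :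
    3 * momentumQuad α c = (15 * α * c - 9 * α - 2) ^ 2 - (6 * α - 2) := by
  unfold momentumQuad; ring

section Roots

variable {α s : ℝ} (hs : 0 ≤ s) (hs2 : s ^ 2 = 6 * α - 2)
include hs hs2

lemma momentumQuad_neg_iff (c : ℝ) :
    momentumQuad α c < 0 ↔ |15 * α * c - 9 * α - 2| < s := by
  rw [← sq_lt_sq₀ (abs_nonneg _) hs, sq_abs, ← mul_lt_mul_iff_of_pos_left three_pos,
    three_mul_momentumQuad]
  constructor <;> intro h <;> linarith

lemma momentumQuad_pos_iff (c : ℝ) :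
    0 < momentumQuad α c ↔ s < |15 * α * c - 9 * α - 2| := by
  rw [← sq_lt_sq₀ hs (abs_nonneg _), sq_abs, ← mul_lt_mul_iff_of_pos_left three_pos,
    three_mul_momentumQuad]
  constructor <;> intro h <;> linarith

variable (hα : 0 < α)
include hα

lemma momentumQuad_neg_of_root_lt {c : ℝ} (hc₂ : (9 * α + 2 - s) / (15 * α) < c)
    (hc : c < 3 / 5) : momentumQuad α c < 0 := by
  rw [div_lt_iff₀ (by positivity)] at hc₂
  exact (momentumQuad_neg_iff hs hs2 c).2 (abs_lt.2 ⟨by linarith, by nlinarith⟩)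

lemma momentumQuad_pos_of_lt_root {c : ℝ} (hc₂ : c < (9 * α + 2 - s) / (15 * α)) :
    0 < momentumQuad α c := by
  rw [lt_div_iff₀ (by positivity)] at hc₂
  exact (momentumQuad_pos_iff hs hs2 c).2 (lt_abs.2 (Or.inr (by linarith)))

end Roots

lemma root_mem_Ioo {α s : ℝ} (hs : 0 ≤ s) (hs2 : s ^ 2 = 6 * α - 2) (hα : 1 < α) :
    (9 * α + 2 - s) / (15 * α) ∈ Ioo (0 : ℝ) (3 / 5) := by
  rw [mem_Ioo, lt_div_iff₀ (by positivity), div_lt_iff₀ (by positivity)]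
  constructor <;> nlinarith

lemma momentumQuad_pos_of_one_lt {α c : ℝ} (hα : 1 / 2 < α) (hc : 1 < c) :
    0 < momentumQuad α c := by
  have hu : 6 * α - 2 < 15 * α * c - 9 * α - 2 := by nlinarith
  have h3Q := three_mul_momentumQuad α c
  nlinarith

/-- For `α > 1` (case `p = 1`): `K' > 0` on `(c₂,3/5)` and on `(1,∞)`, and `K' < 0` on
`(0,c₂)`. -/
theorem stmt_17 (α : ℝ) (hα : 1 < α)
    (K : ℝ → ℝ)
    (hK : ∀ c ∈ Set.Ioo (0 : ℝ) (3 / 5) ∪ Set.Ioi (1 : ℝ),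
      K c = (c - 1) ^ 2 * ((5 * c - 3) / (4 * (c - 1))) ^ ((1 : ℝ) / α) *
        (1 + 5 * (c - 1) / ((5 * c - 3) * (3 * α - 1))))
    (c₂ : ℝ)
    (hc₂ : c₂ = (9 * α + 2 - Real.sqrt 2 * Real.sqrt (3 * α - 1)) / (15 * α)) :
    (∀ c ∈ Set.Ioo c₂ (3 / 5 : ℝ), 0 < deriv K c) ∧
    (∀ c : ℝ, 1 < c → 0 < deriv K c) ∧
    (∀ c ∈ Set.Ioo (0 : ℝ) c₂, deriv K c < 0) := by
  have hα0 : 0 < α := by linarith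
  have hα3 : 1 / 3 < α := by linarith
  set s := √2 * √(3 * α - 1)
  have hs : 0 ≤ s := by positivity
  have hs2 : s ^ 2 = 6 * α - 2 := by
    rw [mul_pow, sq_sqrt zero_le_two, sq_sqrt (by linarith)]; ring
  obtain ⟨hc₂_pos, hc₂_lt⟩ := hc₂ ▸ root_mem_Ioo hs hs2 hα
  have hderiv := fun c hc ↦ deriv_eq_momentumWeight_mul hα3 hK (c := c) hc
  have hweight := fun c hc ↦ momentumWeight_pos hα3 (ratio_pos_of_mem (c := c) hc)
  refine ⟨fun c ⟨hc₂c, hc⟩ ↦ ?_, fun c hc ↦ ?_, fun c ⟨hc, hcc₂⟩ ↦ ?_⟩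
  · have hcU : c ∈ Ioo (0 : ℝ) (3 / 5) ∪ Ioi 1 := Or.inl ⟨hc₂_pos.trans hc₂c, hc⟩
    rw [hderiv c hcU]
    exact mul_pos (hweight c hcU) (mul_pos_of_neg_of_neg (by linarith)
      (momentumQuad_neg_of_root_lt hs hs2 hα0 (hc₂ ▸ hc₂c) hc))
  · rw [hderiv c (Or.inr hc)]
    exact mul_pos (hweight c (Or.inr hc))
      (mul_pos (by linarith) (momentumQuad_pos_of_one_lt (by linarith) hc))
  · have hcU : c ∈ Ioo (0 : ℝ) (3 / 5) ∪ Ioi 1 := Or.inl ⟨hc, hcc₂.trans hc₂_lt⟩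
    rw [hderiv c hcU]
    exact mul_neg_of_pos_of_neg (hweight c hcU) (mul_neg_of_neg_of_pos (by linarith)
      (momentumQuad_pos_of_lt_root hs hs2 hα0 (hc₂ ▸ hcc₂)))
end

section
/- Fix a real number α with 1/2 < α ≤ 1, define K : (1,∞) → ℝ by K(c) = (c−1)·((5c−3)/(4(c−1)))^{1/α}·( 1 + 10(c−1)/((5c−3)(4α−2)) ), and set c₁ = (3α+1+√(2α−1))/(5α). Then K'(c) < 0 for every c with 1 < c < c₁, and K'(c) > 0 for every c > c₁. -/
/-!
Differentiating, `K'(c)` is a positive factor times `(5αc − 3α − 1)² − (2α − 1)`. For `c > 1`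
the base `5αc − 3α − 1` exceeds `2α − 1 > 0`, so the sign of `K'(c)` is that of
`5αc − 3α − 1 − √(2α − 1)`, which changes exactly at `c₁`; and `α ≤ 1` gives `c₁ ≥ 1`.
-/

open Real

noncomputable def solitonMomentum (α c : ℝ) : ℝ :=
  (c - 1) * ((5 * c - 3) / (4 * (c - 1))) ^ ((1 : ℝ) / α) *
    (1 + 10 * (c - 1) / ((5 * c - 3) * (4 * α - 2)))

theorem hasDerivAt_solitonMomentum {α c : ℝ} (hα : α ≠ 0) (hα₂ : 2 * α - 1 ≠ 0) (hc : 1 < c) :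
    HasDerivAt (solitonMomentum α)
      (2 * ((5 * c - 3) / (4 * (c - 1))) ^ ((1 : ℝ) / α) / (α * (2 * α - 1) * (5 * c - 3) ^ 2) *
        ((5 * α * c - 3 * α - 1) ^ 2 - (2 * α - 1))) c := by
  have hc₁ : c - 1 ≠ 0 := by linarith
  have hc₃ : 5 * c - 3 ≠ 0 := by linarith
  have hα₄ : 4 * α - 2 ≠ 0 := by contrapose! hα₂; linarith
  have hR : HasDerivAt (fun x : ℝ => (5 * x - 3) / (4 * (x - 1)))
      ((5 * (4 * (c - 1)) - (5 * c - 3) * 4) / (4 * (c - 1)) ^ 2) c :=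
    (((hasDerivAt_id c).const_mul 5).sub_const 3).div
      (((hasDerivAt_id c).sub_const 1).const_mul 4) (by simpa using hc₁) |>.congr_deriv
      (by simp)
  have hRpos : 0 < (5 * c - 3) / (4 * (c - 1)) := div_pos (by linarith) (by linarith)
  have hRpow := hR.rpow_const (p := (1 : ℝ) / α) (Or.inl hRpos.ne')
  have hcorr : HasDerivAt (fun x : ℝ => 1 + 10 * (x - 1) / ((5 * x - 3) * (4 * α - 2)))
      ((10 * ((5 * c - 3) * (4 * α - 2)) - 10 * (c - 1) * (5 * (4 * α - 2))) /
        ((5 * c - 3) * (4 * α - 2)) ^ 2) c :=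
    ((((hasDerivAt_id c).sub_const 1).const_mul 10).div
      ((((hasDerivAt_id c).const_mul 5).sub_const 3).mul_const (4 * α - 2))
      (mul_ne_zero hc₃ hα₄) |>.const_add 1).congr_deriv (by simp)
  refine ((((hasDerivAt_id c).sub_const 1).mul hRpow).mul hcorr).congr_deriv ?_
  simp only [Pi.mul_apply, id]
  rw [rpow_sub hRpos, rpow_one]
  have hα₂' : α * 2 - 1 ≠ 0 := by rwa [mul_comm]
  field_simp
  ring

noncomputable def criticalSpeed (α : ℝ) : ℝ :=
  (3 * α + 1 + √(2 * α - 1)) / (5 * α)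

section Sign

variable {α c : ℝ}

theorem solitonMomentum_derivFactor_pos (hα : 1 / 2 < α) (hc : 1 < c) :
    0 < 2 * ((5 * c - 3) / (4 * (c - 1))) ^ ((1 : ℝ) / α) / (α * (2 * α - 1) * (5 * c - 3) ^ 2) := by
  have hbase : 0 < (5 * c - 3) / (4 * (c - 1)) := div_pos (by linarith) (by linarith)
  have hden : 0 < α * (2 * α - 1) * (5 * c - 3) ^ 2 := by
    have : 0 < 5 * c - 3 := by linarith
    have : 0 < 2 * α - 1 := by linarith
    have : 0 < α := by linarith
    positivity
  exact div_pos (mul_pos two_pos (rpow_pos_of_pos hbase _)) hden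

theorem sq_lt_of_lt_criticalSpeed (hα : 1 / 2 < α) (hc : 1 < c)
    (hc₁ : c < criticalSpeed α) :
    (5 * α * c - 3 * α - 1) ^ 2 < 2 * α - 1 := by
  have hlt : 5 * α * c - 3 * α - 1 < √(2 * α - 1) := by
    rw [criticalSpeed, lt_div_iff₀ (by linarith)] at hc₁
    linarith
  have hpos : 0 < 5 * α * c - 3 * α - 1 := by nlinarith
  calc (5 * α * c - 3 * α - 1) ^ 2 < √(2 * α - 1) ^ 2 :=
        pow_lt_pow_left₀ hlt hpos.le two_ne_zero
    _ = 2 * α - 1 := sq_sqrt (by linarith)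

theorem lt_sq_of_criticalSpeed_lt (hα : 1 / 2 < α)
    (hc₁ : criticalSpeed α < c) :
    2 * α - 1 < (5 * α * c - 3 * α - 1) ^ 2 := by
  have hlt : √(2 * α - 1) < 5 * α * c - 3 * α - 1 := by
    rw [criticalSpeed, div_lt_iff₀ (by linarith)] at hc₁
    linarith
  calc 2 * α - 1 = √(2 * α - 1) ^ 2 := (sq_sqrt (by linarith)).symm
    _ < (5 * α * c - 3 * α - 1) ^ 2 := pow_lt_pow_left₀ hlt (sqrt_nonneg _) two_ne_zero

theorem one_le_criticalSpeed (hα : 1 / 2 < α) (hα' : α ≤ 1) :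
    1 ≤ criticalSpeed α := by
  rw [criticalSpeed, le_div_iff₀ (by linarith)]
  have hs : 2 * α - 1 ≤ √(2 * α - 1) :=
    le_sqrt_of_sq_le (by nlinarith)
  linarith

theorem deriv_solitonMomentum_neg (hα : 1 / 2 < α) (hc : 1 < c) (hc₁ : c < criticalSpeed α) :
    deriv (solitonMomentum α) c < 0 := by
  rw [(hasDerivAt_solitonMomentum (by linarith : 0 < α).ne' (by linarith) hc).deriv]
  exact mul_neg_of_pos_of_neg (solitonMomentum_derivFactor_pos hα hc)
    (sub_neg.2 (sq_lt_of_lt_criticalSpeed hα hc hc₁))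

theorem deriv_solitonMomentum_pos (hα : 1 / 2 < α) (hα' : α ≤ 1) (hc₁ : criticalSpeed α < c) :
    0 < deriv (solitonMomentum α) c := by
  have hc : 1 < c := (one_le_criticalSpeed hα hα').trans_lt hc₁
  rw [(hasDerivAt_solitonMomentum (by linarith : 0 < α).ne' (by linarith) hc).deriv]
  exact mul_pos (solitonMomentum_derivFactor_pos hα hc)
    (sub_pos.2 (lt_sq_of_criticalSpeed_lt hα hc₁))

end Sign

/-- For `1/2 < α ≤ 1` (case `p = 2`): `K' < 0` on `(1,c₁)` and `K' > 0` on `(c₁,∞)`,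
where `c₁ = (3α+1+√(2α−1))/(5α)`. -/
theorem stmt_18 (α : ℝ) (hα : 1 / 2 < α) (hα' : α ≤ 1)
    (K : ℝ → ℝ)
    (hK : ∀ c ∈ Set.Ioi (1 : ℝ),
      K c = (c - 1) * ((5 * c - 3) / (4 * (c - 1))) ^ ((1 : ℝ) / α) *
        (1 + 10 * (c - 1) / ((5 * c - 3) * (4 * α - 2))))
    (c₁ : ℝ)
    (hc₁ : c₁ = (3 * α + 1 + Real.sqrt (2 * α - 1)) / (5 * α)) :
    (∀ c : ℝ, 1 < c → c < c₁ → deriv K c < 0) ∧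
    (∀ c : ℝ, c₁ < c → 0 < deriv K c) := by
  have hc₁ : c₁ = criticalSpeed α := hc₁
  have hderiv : ∀ c, 1 < c → deriv K c = deriv (solitonMomentum α) c := fun c hc =>
    (Filter.eventuallyEq_of_mem (Ioi_mem_nhds hc) hK).deriv_eq
  subst hc₁
  refine ⟨fun c hc hcc => ?_, fun c hcc => ?_⟩
  · rw [hderiv c hc]
    exact deriv_solitonMomentum_neg hα hc hcc
  · rw [hderiv c ((one_le_criticalSpeed hα hα').trans_lt hcc)]
    exact deriv_solitonMomentum_pos hα hα' hcc
end

section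
/- Fix a real number α with 1 < α ≤ 2 and define K : (1,∞) → ℝ by K(c) = (c−1)·((5c−3)/(4(c−1)))^{1/α}·( 1 + 10(c−1)/((5c−3)(4α−2)) ). Then K'(c) > 0 for every c > 1. -/
/-!
For `c > 1` the momentum factors as
`K c = (c - 1) ^ (1 - 1/α) * ((5c - 3)/4) ^ (1/α) * (1 + 10 (c - 1) / ((5c - 3)(4α - 2)))`.
Since `α > 1`, both exponents are positive, so each of the three factors is positive with positive
derivative; the last one because the Möbius map `c ↦ (c - 1)/(5c - 3)` has determinant `2 > 0`.
The product rule then gives `K' c > 0`.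
-/

open Filter Topology

def HasPosDerivAt (f : ℝ → ℝ) (x : ℝ) : Prop :=
  ∃ d, 0 < d ∧ HasDerivAt f d x

namespace HasPosDerivAt

variable {f g : ℝ → ℝ} {x : ℝ}

theorem deriv_pos (hf : HasPosDerivAt f x) : 0 < deriv f x := by
  obtain ⟨d, hd, hf⟩ := hf
  rwa [hf.deriv]

theorem congr_of_eventuallyEq (hf : HasPosDerivAt f x) (h : g =ᶠ[𝓝 x] f) : HasPosDerivAt g x :=
  let ⟨d, hd, hf⟩ := hf
  ⟨d, hd, hf.congr_of_eventuallyEq h⟩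

theorem mul (hf : HasPosDerivAt f x) (hg : HasPosDerivAt g x) (hfx : 0 < f x) (hgx : 0 < g x) :
    HasPosDerivAt (fun y => f y * g y) x :=
  let ⟨_, hf', hf⟩ := hf
  let ⟨_, hg', hg⟩ := hg
  ⟨_, by positivity, hf.mul hg⟩

theorem rpow_const {p : ℝ} (hf : HasPosDerivAt f x) (hfx : 0 < f x) (hp : 0 < p) :
    HasPosDerivAt (fun y => f y ^ p) x :=
  let ⟨_, hf', hf⟩ := hf
  ⟨_, by positivity, hf.rpow_const (Or.inl hfx.ne')⟩

theorem const_add (hf : HasPosDerivAt f x) (a : ℝ) : HasPosDerivAt (fun y => a + f y) x :=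
  let ⟨d, hd, hf⟩ := hf
  ⟨d, hd, hf.const_add a⟩

theorem affine {a b : ℝ} (ha : 0 < a) (x : ℝ) : HasPosDerivAt (fun y => a * y + b) x :=
  ⟨a, ha, by simpa using ((hasDerivAt_id x).const_mul a).add_const b⟩

theorem affine_div_affine {a b c d : ℝ} (hdet : 0 < a * d - b * c) (hx : c * x + d ≠ 0) :
    HasPosDerivAt (fun y => (a * y + b) / (c * y + d)) x := by
  have hnum : HasDerivAt (fun y => a * y + b) a x := by
    simpa using ((hasDerivAt_id x).const_mul a).add_const b
  have hden : HasDerivAt (fun y => c * y + d) c x := by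
    simpa using ((hasDerivAt_id x).const_mul c).add_const d
  refine ⟨_, ?_, hnum.div hden hx⟩
  have : a * (c * x + d) - (a * x + b) * c = a * d - b * c := by ring
  rw [this]
  positivity

end HasPosDerivAt

theorem mul_div_rpow_eq_rpow_one_sub_mul_rpow {u v : ℝ} (hu : 0 < u) (hv : 0 ≤ v) (p : ℝ) :
    u * (v / u) ^ p = u ^ (1 - p) * v ^ p := by
  rw [Real.div_rpow hv hu.le, Real.rpow_sub hu, Real.rpow_one]
  field_simp

theorem stmt_19_general (α : ℝ) (hα : 1 < α)
    (K : ℝ → ℝ)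
    (hK : ∀ c ∈ Set.Ioi (1 : ℝ),
      K c = (c - 1) * ((5 * c - 3) / (4 * (c - 1))) ^ ((1 : ℝ) / α) *
        (1 + 10 * (c - 1) / ((5 * c - 3) * (4 * α - 2)))) :
    ∀ c : ℝ, 1 < c → 0 < deriv K c := by
  intro c hc
  have hp : 0 < 1 / α := by positivity
  have hq : 0 < 1 - 1 / α := by rwa [sub_pos, div_lt_one (by linarith)]
  have hβ : 0 < 4 * α - 2 := by linarith
  have hc₁ : 0 < c - 1 := by linarith
  have hc₅ : 0 < 5 * c - 3 := by linarith
  have hK_factor : K =ᶠ[𝓝 c] fun x => (x - 1) ^ (1 - 1 / α) * ((5 * x - 3) / 4) ^ (1 / α) *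
      (1 + 10 * (x - 1) / ((5 * x - 3) * (4 * α - 2))) := by
    filter_upwards [Ioi_mem_nhds hc] with x (hx : 1 < x)
    rw [hK x hx, ← div_div,
      mul_div_rpow_eq_rpow_one_sub_mul_rpow (by linarith) (by linarith)]
  have h₁ : HasPosDerivAt (fun x => (x - 1) ^ (1 - 1 / α)) c := by
    simpa [sub_eq_add_neg] using (HasPosDerivAt.affine one_pos c (b := -1)).rpow_const
      (by linarith) hq
  have h₂ : HasPosDerivAt (fun x => ((5 * x - 3) / 4) ^ (1 / α)) c := by
    refine (HasPosDerivAt.affine (by norm_num : (0 : ℝ) < 5 / 4) c (b := -3 / 4)).rpow_const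
      (by linarith) hp |>.congr_of_eventuallyEq (Eventually.of_forall fun x => ?_)
    ring_nf
  have h₃ : HasPosDerivAt (fun x => 1 + 10 * (x - 1) / ((5 * x - 3) * (4 * α - 2))) c := by
    refine ((HasPosDerivAt.affine_div_affine (a := 10) (b := -10) (c := 5 * (4 * α - 2))
      (d := -3 * (4 * α - 2)) (by nlinarith) (by nlinarith)).const_add 1).congr_of_eventuallyEq
      (Eventually.of_forall fun x => ?_)
    ring_nf
  refine ((h₁.mul h₂ ?_ ?_).mul h₃ ?_ ?_).congr_of_eventuallyEq hK_factor |>.deriv_pos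
  all_goals positivity

/-- For `1 < α ≤ 2` (case `p = 2`): `K' > 0` on `(1,∞)`. -/
theorem stmt_19 (α : ℝ) (hα : 1 < α) (hα' : α ≤ 2)
    (K : ℝ → ℝ)
    (hK : ∀ c ∈ Set.Ioi (1 : ℝ),
      K c = (c - 1) * ((5 * c - 3) / (4 * (c - 1))) ^ ((1 : ℝ) / α) *
        (1 + 10 * (c - 1) / ((5 * c - 3) * (4 * α - 2)))) :
    ∀ c : ℝ, 1 < c → 0 < deriv K c :=
  stmt_19_general α hα K hK
end
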